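/- arXiv:1904.04968 — 6 statements merged into one kernel-verified Lean document; each statement's English description precedes it below -/
import Mathlib

section
/- Let B_l ≤ B_u be continuous on [a,b] and f⁻, f⁺ continuous on F = {(s,h) : s ∈ [a,b], B_l(s) ≤ h ≤ B_u(s)} with f⁻ ≤ f⁺ and |f^±| ≤ B. If a nonempty family {h_α} of continuous functions each satisfies B_l ≤ h_α ≤ B_u, D⁻h_α(s) ≥ f⁻(s,h_α(s)) and D⁺h_α(s) ≤ f⁺(s,h_α(s)) for all s ∈ [a,b), then the pointwise supremum h̄(s) = sup_α h_α(s) is continuous, satisfies B_l ≤ h̄ ≤ B_u, and satisfies D⁻h̄(s) ≥ f⁻(s,h̄(s)) and D⁺h̄(s) ≤ f⁺(s,h̄(s)) for all s ∈ [a,b). -/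
/-!
Since `|f^±| ≤ B`, the comparison principle for Dini derivatives makes every `h_α` `B`-Lipschitz,
hence so is their supremum `h̄`. At a point `s`, continuity of `f^±` at `(s, h̄ s)` gives a box in
which `f^±` varies by less than `ε`. For `t` close to `s`, any member that nearly attains the
supremum at `s` keeps its graph inside that box over `[s, t]`, so by comparison its increment on
`[s, t]` lies between `(f⁻(s, h̄ s) - ε) (t - s)` and `(f⁺(s, h̄ s) + ε) (t - s)`; a member far
below the supremum at `s` cannot catch up by time `t`, being Lipschitz.
-/

open Filter Set Topology NNReal

noncomputable def DiniUpper (h : ℝ → ℝ) (s : ℝ) : EReal :=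
  Filter.limsup (fun s' => (((h s' - h s) / (s' - s) : ℝ) : EReal)) (nhdsWithin s (Set.Ioi s))

noncomputable def DiniLower (h : ℝ → ℝ) (s : ℝ) : EReal :=
  Filter.liminf (fun s' => (((h s' - h s) / (s' - s) : ℝ) : EReal)) (nhdsWithin s (Set.Ioi s))

lemma diniUpper_le_of_forall_eventually {g : ℝ → ℝ} {s x : ℝ}
    (hg : ∀ ε > 0, ∀ᶠ t in 𝓝[>] s, g t ≤ g s + (x + ε) * (t - s)) :
    DiniUpper g s ≤ x := by
  refine EReal.le_of_forall_lt_iff_le.1 fun z hz => ?_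
  have hε : 0 < z - x := sub_pos.2 (EReal.coe_lt_coe_iff.1 hz)
  refine limsup_le_of_le (by isBoundedDefault) ?_
  filter_upwards [hg _ hε, self_mem_nhdsWithin] with t ht hst
  rw [EReal.coe_le_coe_iff, div_le_iff₀ (sub_pos.2 hst)]
  linarith

lemma le_diniLower_of_forall_eventually {g : ℝ → ℝ} {s x : ℝ}
    (hg : ∀ ε > 0, ∀ᶠ t in 𝓝[>] s, g s + (x - ε) * (t - s) ≤ g t) :
    (x : EReal) ≤ DiniLower g s := by
  refine EReal.ge_of_forall_gt_iff_ge.1 fun z hz => ?_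
  have hε : 0 < x - z := sub_pos.2 (EReal.coe_lt_coe_iff.1 hz)
  refine le_liminf_of_le (by isBoundedDefault) ?_
  filter_upwards [hg _ hε, self_mem_nhdsWithin] with t ht hst
  rw [EReal.coe_le_coe_iff, le_div_iff₀ (sub_pos.2 hst)]
  linarith

section Comparison

variable {g : ℝ → ℝ} {s t : ℝ}

lemma image_le_add_mul_of_frequently_slope_lt {C : ℝ} (hst : s ≤ t)
    (hg : ContinuousOn g (Icc s t))
    (hd : ∀ u ∈ Ico s t, ∀ r, C < r → ∃ᶠ z in 𝓝[>] u, slope g u z < r) :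
    g t ≤ g s + C * (t - s) := by
  have hB : ∀ x, HasDerivWithinAt (fun x => g s + C * (x - s)) C (Ici x) x := fun x => by
    simpa using (((hasDerivWithinAt_id x (Ici x)).sub_const s).const_mul C).const_add (g s)
  simpa using image_le_of_liminf_slope_right_le_deriv_boundary hg (by simp) (by fun_prop)
    (fun x _ => hB x) hd (right_mem_Icc.2 hst)

lemma image_le_add_mul_of_diniUpper_le {C : ℝ} (hst : s ≤ t) (hg : ContinuousOn g (Icc s t))
    (hd : ∀ u ∈ Ico s t, DiniUpper g u ≤ C) :
    g t ≤ g s + C * (t - s) := by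
  refine image_le_add_mul_of_frequently_slope_lt hst hg fun u hu r hr => ?_
  have hlt : DiniUpper g u < r := (hd u hu).trans_lt (EReal.coe_lt_coe_iff.2 hr)
  refine ((eventually_lt_of_limsup_lt hlt).mono fun z hz => ?_).frequently
  rw [slope_def_field]
  exact_mod_cast hz

lemma add_mul_le_image_of_le_diniLower {c : ℝ} (hst : s ≤ t) (hg : ContinuousOn g (Icc s t))
    (hd : ∀ u ∈ Ico s t, (c : EReal) ≤ DiniLower g u) :
    g s + c * (t - s) ≤ g t := by
  suffices -g t ≤ -g s + -c * (t - s) by linarith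
  refine image_le_add_mul_of_frequently_slope_lt (g := fun x => -g x) hst hg.neg
    fun u hu r hr => ?_
  have hlt : ((-r : ℝ) : EReal) < DiniLower g u :=
    (EReal.coe_lt_coe_iff.2 (by linarith)).trans_le (hd u hu)
  refine ((eventually_lt_of_lt_liminf hlt).mono fun z hz => ?_).frequently
  have hz : -r < (g z - g u) / (z - u) := by exact_mod_cast hz
  rw [slope_def_field, show -g z - -g u = -(g z - g u) by ring, neg_div]
  linarith

end Comparison

lemma lipschitzOnWith_of_dini_bounds {g : ℝ → ℝ} {a b : ℝ} {K : ℝ≥0}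
    (hg : ContinuousOn g (Icc a b))
    (hd : ∀ u ∈ Ico a b, ((-K : ℝ) : EReal) ≤ DiniLower g u ∧ DiniUpper g u ≤ (K : ℝ)) :
    LipschitzOnWith K g (Icc a b) := by
  refine LipschitzOnWith.of_le_add_mul K fun x hx y hy => ?_
  have hsub : ∀ {x y}, x ∈ Icc a b → y ∈ Icc a b → ∀ u ∈ Ico x y, u ∈ Ico a b :=
    fun hx hy u hu => ⟨hx.1.trans hu.1, hu.2.trans_le hy.2⟩
  rcases le_total x y with hxy | hyx
  · have := add_mul_le_image_of_le_diniLower hxy (hg.mono (Icc_subset_Icc hx.1 hy.2))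
      fun u hu => (hd u (hsub hx hy u hu)).1
    rw [Real.dist_eq, abs_of_nonpos (by linarith)]
    linarith
  · have := image_le_add_mul_of_diniUpper_le hyx (hg.mono (Icc_subset_Icc hy.1 hx.2))
      fun u hu => (hd u (hsub hy hx u hu)).2
    rw [Real.dist_eq, abs_of_nonneg (by linarith)]
    linarith

lemma LipschitzOnWith.ciSup {ι α : Type*} [Nonempty ι] [PseudoMetricSpace α] {f : ι → α → ℝ}
    {S : Set α} {K : ℝ≥0} (hf : ∀ i, LipschitzOnWith K (f i) S)
    (hbdd : ∀ x ∈ S, BddAbove (range fun i => f i x)) :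
    LipschitzOnWith K (fun x => ⨆ i, f i x) S :=
  LipschitzOnWith.of_le_add_mul K fun _ hx y hy => ciSup_le fun i =>
    ((hf i).le_add_mul hx hy).trans (add_le_add_left (le_ciSup (hbdd y hy) i) _)

lemma dist_graph_le {g : ℝ → ℝ} {K : ℝ≥0} {s t u y c : ℝ} (hg : LipschitzOnWith K g (Icc s t))
    (hu : u ∈ Icc s t) (hc : 0 ≤ c) (hy : |g s - y| ≤ c * (t - s)) :
    dist (u, g u) (s, y) ≤ (1 + K + c) * (t - s) := by
  have hus : dist u s = u - s := by rw [Real.dist_eq, abs_of_nonneg (sub_nonneg.2 hu.1)]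
  have hlip := hg.dist_le_mul u hu s (left_mem_Icc.2 (hu.1.trans hu.2))
  have hts : 0 ≤ t - s := by linarith [hu.1, hu.2]
  have hKc : 0 ≤ ((K : ℝ) + c) * (t - s) := by positivity
  rw [Prod.dist_eq, hus] at *
  refine max_le (by nlinarith [hu.2]) ?_
  calc dist (g u) y ≤ dist (g u) (g s) + dist (g s) y := dist_triangle _ _ _
    _ ≤ K * (u - s) + c * (t - s) := add_le_add hlip (by rwa [Real.dist_eq])
    _ ≤ (1 + K + c) * (t - s) := by nlinarith [hu.2, K.coe_nonneg]

lemma ContinuousWithinAt.eventually_nhdsGT_along_graph {f : ℝ → ℝ → ℝ} {F : Set (ℝ × ℝ)}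
    {s y ε c : ℝ} (hf : ContinuousWithinAt (fun p : ℝ × ℝ => f p.1 p.2) F (s, y)) (hε : 0 < ε)
    (K : ℝ≥0) (hc : 0 ≤ c) :
    ∀ᶠ t in 𝓝[>] s, ∀ g : ℝ → ℝ, LipschitzOnWith K g (Icc s t) → |g s - y| ≤ c * (t - s) →
      ∀ u ∈ Icc s t, (u, g u) ∈ F → |f u (g u) - f s y| < ε := by
  obtain ⟨δ, hδ, hball⟩ := Metric.continuousWithinAt_iff.1 hf ε hε
  have hsmall : Tendsto (fun t => (1 + K + c) * (t - s)) (𝓝[>] s) (𝓝 0) :=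
    ((by fun_prop : Continuous fun t => (1 + K + c) * (t - s)).tendsto' s 0 (by simp)).mono_left
      nhdsWithin_le_nhds
  filter_upwards [hsmall.eventually (gt_mem_nhds hδ)] with t ht g hg hgy u hu huF
  exact hball huF ((dist_graph_le hg hu hc hgy).trans_lt ht)

section Supremum

variable {ι : Type*} [Nonempty ι] {h : ι → ℝ → ℝ} {f : ℝ → ℝ → ℝ} {F : Set (ℝ × ℝ)} {K : ℝ≥0}
  {s b : ℝ}

lemma le_diniLower_ciSup (hsb : s < b) (hbdd : ∀ u ∈ Icc s b, BddAbove (range fun α => h α u))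
    (hlip : ∀ α, LipschitzOnWith K (h α) (Icc s b)) (hF : ∀ α, ∀ u ∈ Icc s b, (u, h α u) ∈ F)
    (hf : ContinuousWithinAt (fun p : ℝ × ℝ => f p.1 p.2) F (s, ⨆ α, h α s))
    (hdini : ∀ α, ∀ u ∈ Ico s b, (f u (h α u) : EReal) ≤ DiniLower (h α) u) :
    (f s (⨆ α, h α s) : EReal) ≤ DiniLower (fun x => ⨆ α, h α x) s := by
  set y := ⨆ α, h α s
  refine le_diniLower_of_forall_eventually fun ε hε => ?_
  filter_upwards [hf.eventually_nhdsGT_along_graph (half_pos hε) K (half_pos hε).le,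
    Ioo_mem_nhdsGT hsb] with t hnear ht
  have hsub : Icc s t ⊆ Icc s b := Icc_subset_Icc_right ht.2.le
  have hgap : 0 < ε / 2 * (t - s) := mul_pos (half_pos hε) (sub_pos.2 ht.1)
  obtain ⟨α, hα⟩ : ∃ α, y - ε / 2 * (t - s) < h α s := exists_lt_of_lt_ciSup (by linarith)
  have hαy : |h α s - y| ≤ ε / 2 * (t - s) :=
    abs_le.2 ⟨by linarith, by linarith [le_ciSup (hbdd s (left_mem_Icc.2 hsb.le)) α]⟩
  have hcomp : h α s + (f s y - ε / 2) * (t - s) ≤ h α t :=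
    add_mul_le_image_of_le_diniLower ht.1.le ((hlip α).continuousOn.mono hsub) fun u hu => by
      have hu' := Ico_subset_Icc_self hu
      have := hnear (h α) ((hlip α).mono hsub) hαy u hu' (hF α u (hsub hu'))
      refine le_trans ?_ (hdini α u ⟨hu.1, hu.2.trans ht.2⟩)
      exact EReal.coe_le_coe_iff.2 (by linarith [abs_sub_lt_iff.1 this])
  have := le_ciSup (hbdd t (hsub (right_mem_Icc.2 ht.1.le))) α
  show y + (f s y - ε) * (t - s) ≤ ⨆ α, h α t
  linarith

lemma diniUpper_ciSup_le (hsb : s < b) (hbdd : BddAbove (range fun α => h α s))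
    (hlip : ∀ α, LipschitzOnWith K (h α) (Icc s b)) (hF : ∀ α, ∀ u ∈ Icc s b, (u, h α u) ∈ F)
    (hf : ContinuousWithinAt (fun p : ℝ × ℝ => f p.1 p.2) F (s, ⨆ α, h α s))
    (hdini : ∀ α, ∀ u ∈ Ico s b, DiniUpper (h α) u ≤ f u (h α u)) :
    DiniUpper (fun x => ⨆ α, h α x) s ≤ f s (⨆ α, h α s) := by
  set y := ⨆ α, h α s
  -- Members more than `c (t - s)` below `y` at `s` stay below `y - |f s y| (t - s)` at `t`.
  set c := (K : ℝ) + |f s y|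
  refine diniUpper_le_of_forall_eventually fun ε hε => ?_
  filter_upwards [hf.eventually_nhdsGT_along_graph hε K (by positivity : 0 ≤ c),
    Ioo_mem_nhdsGT hsb] with t hnear ht
  have hsub : Icc s t ⊆ Icc s b := Icc_subset_Icc_right ht.2.le
  show ⨆ α, h α t ≤ y + (f s y + ε) * (t - s)
  refine ciSup_le fun α => ?_
  have hαy : h α s ≤ y := le_ciSup hbdd α
  rcases le_or_gt (h α s) (y - c * (t - s)) with hfar | hclose
  · have hlipα := ((hlip α).mono hsub).le_add_mul (right_mem_Icc.2 ht.1.le)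
      (left_mem_Icc.2 ht.1.le)
    rw [Real.dist_eq, abs_of_pos (sub_pos.2 ht.1)] at hlipα
    have := mul_le_mul_of_nonneg_right (show -|f s y| ≤ f s y + ε by linarith [neg_abs_le (f s y)])
      (sub_pos.2 ht.1).le
    linarith
  · have hαy' : |h α s - y| ≤ c * (t - s) := abs_le.2 ⟨by linarith, by linarith⟩
    have hcomp : h α t ≤ h α s + (f s y + ε) * (t - s) :=
      image_le_add_mul_of_diniUpper_le ht.1.le ((hlip α).continuousOn.mono hsub) fun u hu => by
        have hu' := Ico_subset_Icc_self hu
        have := hnear (h α) ((hlip α).mono hsub) hαy' u hu' (hF α u (hsub hu'))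
        refine (hdini α u ⟨hu.1, hu.2.trans ht.2⟩).trans ?_
        exact EReal.coe_le_coe_iff.2 (by linarith [abs_sub_lt_iff.1 this])
    linarith

end Supremum

theorem stmt_10_general {ι : Type*} [Nonempty ι] (a b B : ℝ)
    (Bl Bu : ℝ → ℝ) (fm fp : ℝ → ℝ → ℝ)
    (F : Set (ℝ × ℝ))
    (hF : F = {p : ℝ × ℝ | p.1 ∈ Set.Icc a b ∧ Bl p.1 ≤ p.2 ∧ p.2 ≤ Bu p.1})
    (hfmc : ContinuousOn (fun p : ℝ × ℝ => fm p.1 p.2) F)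
    (hfpc : ContinuousOn (fun p : ℝ × ℝ => fp p.1 p.2) F)
    (hbd : ∀ p ∈ F, |fm p.1 p.2| ≤ B ∧ |fp p.1 p.2| ≤ B)
    (h : ι → ℝ → ℝ)
    (hcont : ∀ α, ContinuousOn (h α) (Set.Icc a b))
    (hbounds : ∀ α, ∀ s ∈ Set.Icc a b, Bl s ≤ h α s ∧ h α s ≤ Bu s)
    (hdini : ∀ α, ∀ s ∈ Set.Ico a b,
      ((fm s (h α s) : ℝ) : EReal) ≤ DiniLower (h α) s ∧
      DiniUpper (h α) s ≤ ((fp s (h α s) : ℝ) : EReal)) :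
    ContinuousOn (fun s => ⨆ α, h α s) (Set.Icc a b) ∧
    (∀ s ∈ Set.Icc a b, Bl s ≤ (⨆ α, h α s) ∧ (⨆ α, h α s) ≤ Bu s) ∧
    (∀ s ∈ Set.Ico a b,
      ((fm s (⨆ α, h α s) : ℝ) : EReal) ≤ DiniLower (fun x => ⨆ α, h α x) s ∧
      DiniUpper (fun x => ⨆ α, h α x) s ≤ ((fp s (⨆ α, h α s) : ℝ) : EReal)) := by
  have hgraph : ∀ α, ∀ x ∈ Icc a b, (x, h α x) ∈ F := fun α x hx => hF ▸ ⟨hx, hbounds α x hx⟩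
  have hbdd : ∀ x ∈ Icc a b, BddAbove (range fun α => h α x) := fun x hx =>
    ⟨Bu x, forall_mem_range.2 fun α => (hbounds α x hx).2⟩
  have hlip : ∀ α, LipschitzOnWith B.toNNReal (h α) (Icc a b) := fun α =>
    lipschitzOnWith_of_dini_bounds (hcont α) fun u hu => by
      have hB := hbd _ (hgraph α u (Ico_subset_Icc_self hu))
      have hK := B.le_coe_toNNReal
      exact ⟨le_trans (EReal.coe_le_coe_iff.2 (by linarith [(abs_le.1 hB.1).1])) (hdini α u hu).1,
        (hdini α u hu).2.trans (EReal.coe_le_coe_iff.2 (by linarith [(abs_le.1 hB.2).2]))⟩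
  have hsup : ∀ s ∈ Icc a b, Bl s ≤ (⨆ α, h α s) ∧ (⨆ α, h α s) ≤ Bu s := fun s hs =>
    ⟨(hbounds (Classical.arbitrary ι) s hs).1.trans (le_ciSup (hbdd s hs) _),
      ciSup_le fun α => (hbounds α s hs).2⟩
  refine ⟨(LipschitzOnWith.ciSup hlip hbdd).continuousOn, hsup, fun s hs => ?_⟩
  have hsb : Icc s b ⊆ Icc a b := Icc_subset_Icc_left hs.1
  have hmem : (s, ⨆ α, h α s) ∈ F := hF ▸ ⟨Ico_subset_Icc_self hs, hsup s (Ico_subset_Icc_self hs)⟩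
  have hdini' : ∀ α, ∀ u ∈ Ico s b, _ := fun α u hu => hdini α u (Ico_subset_Ico_left hs.1 hu)
  exact ⟨le_diniLower_ciSup hs.2 (fun u hu => hbdd u (hsb hu)) (fun α => (hlip α).mono hsb)
      (fun α u hu => hgraph α u (hsb hu)) (hfmc _ hmem) fun α u hu => (hdini' α u hu).1,
    diniUpper_ciSup_le hs.2 (hbdd s (Ico_subset_Icc_self hs)) (fun α => (hlip α).mono hsb)
      (fun α u hu => hgraph α u (hsb hu)) (hfpc _ hmem) fun α u hu => (hdini' α u hu).2⟩

theorem stmt_10 {ι : Type*} [Nonempty ι] (a b B : ℝ) (hab : a < b) (hB : 0 < B)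
    (Bl Bu : ℝ → ℝ) (fm fp : ℝ → ℝ → ℝ)
    (hBl : ContinuousOn Bl (Set.Icc a b)) (hBu : ContinuousOn Bu (Set.Icc a b))
    (hBlu : ∀ s ∈ Set.Icc a b, Bl s ≤ Bu s)
    (F : Set (ℝ × ℝ))
    (hF : F = {p : ℝ × ℝ | p.1 ∈ Set.Icc a b ∧ Bl p.1 ≤ p.2 ∧ p.2 ≤ Bu p.1})
    (hfmc : ContinuousOn (fun p : ℝ × ℝ => fm p.1 p.2) F)
    (hfpc : ContinuousOn (fun p : ℝ × ℝ => fp p.1 p.2) F)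
    (hle : ∀ p ∈ F, fm p.1 p.2 ≤ fp p.1 p.2)
    (hbd : ∀ p ∈ F, |fm p.1 p.2| ≤ B ∧ |fp p.1 p.2| ≤ B)
    (h : ι → ℝ → ℝ)
    (hcont : ∀ α, ContinuousOn (h α) (Set.Icc a b))
    (hbounds : ∀ α, ∀ s ∈ Set.Icc a b, Bl s ≤ h α s ∧ h α s ≤ Bu s)
    (hdini : ∀ α, ∀ s ∈ Set.Ico a b,
      ((fm s (h α s) : ℝ) : EReal) ≤ DiniLower (h α) s ∧
      DiniUpper (h α) s ≤ ((fp s (h α s) : ℝ) : EReal)) :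
    ContinuousOn (fun s => ⨆ α, h α s) (Set.Icc a b) ∧
    (∀ s ∈ Set.Icc a b, Bl s ≤ (⨆ α, h α s) ∧ (⨆ α, h α s) ≤ Bu s) ∧
    (∀ s ∈ Set.Ico a b,
      ((fm s (⨆ α, h α s) : ℝ) : EReal) ≤ DiniLower (fun x => ⨆ α, h α x) s ∧
      DiniUpper (fun x => ⨆ α, h α x) s ≤ ((fp s (⨆ α, h α s) : ℝ) : EReal)) :=
  stmt_10_general a b B Bl Bu fm fp F hF hfmc hfpc hbd h hcont hbounds hdini
end

section
/- Under the setup of the feasibility problem: if f⁺(s,·) is concave and f⁻(s,·) is convex for each s, then the set of ξ-feasible functions is convex; that is, if h₁, h₂ are ξ-feasible and θ ∈ [0,1], then θh₁ + (1−θ)h₂ is ξ-feasible. -/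
open Filter Set

def XiFeasible (a b : ℝ) (Bl Bu : ℝ → ℝ) (fm fp : ℝ → ℝ → ℝ) (ξ : ℝ) (h : ℝ → ℝ) : Prop :=
  ContinuousOn h (Set.Icc a b) ∧
  (∀ s ∈ Set.Icc a b, Bl s ≤ h s ∧ h s ≤ Bu s) ∧
  (∀ s ∈ Set.Ico a b,
    ((fm s (h s) - ξ : ℝ) : EReal) ≤ DiniLower h s ∧
    DiniUpper h s ≤ ((fp s (h s) + ξ : ℝ) : EReal))

lemma ereal_le_of_forall_eps {x : EReal} {c : ℝ}
    (h : ∀ ε : ℝ, 0 < ε → x ≤ ((c + ε : ℝ) : EReal)) : x ≤ (c : EReal) := by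
  by_contra hc
  push_neg at hc
  obtain ⟨d, hcd, hdx⟩ := EReal.exists_between_coe_real hc
  have := h (d - c) (by exact_mod_cast sub_pos.mpr (EReal.coe_lt_coe_iff.mp hcd))
  have : x ≤ (d : EReal) := by simpa using this
  exact absurd this (not_le.mpr hdx)

lemma limsup_combo {F : Filter ℝ} {q₁ q₂ : ℝ → ℝ} {c₁ c₂ θ : ℝ}
    (hθ0 : 0 ≤ θ) (hθ1 : θ ≤ 1)
    (H₁ : Filter.limsup (fun x => ((q₁ x : ℝ) : EReal)) F ≤ (c₁ : EReal))
    (H₂ : Filter.limsup (fun x => ((q₂ x : ℝ) : EReal)) F ≤ (c₂ : EReal)) :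
    Filter.limsup (fun x => ((θ * q₁ x + (1 - θ) * q₂ x : ℝ) : EReal)) F
      ≤ ((θ * c₁ + (1 - θ) * c₂ : ℝ) : EReal) := by
  apply ereal_le_of_forall_eps
  intro ε hε
  have e₁ : ∀ᶠ x in F, ((q₁ x : ℝ) : EReal) < ((c₁ + ε : ℝ) : EReal) :=
    eventually_lt_of_limsup_lt (lt_of_le_of_lt H₁ (by exact_mod_cast lt_add_of_pos_right c₁ hε))
  have e₂ : ∀ᶠ x in F, ((q₂ x : ℝ) : EReal) < ((c₂ + ε : ℝ) : EReal) :=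
    eventually_lt_of_limsup_lt (lt_of_le_of_lt H₂ (by exact_mod_cast lt_add_of_pos_right c₂ hε))
  refine limsup_le_of_le (by isBoundedDefault) ?_
  filter_upwards [e₁, e₂] with x hx1 hx2
  rw [EReal.coe_lt_coe_iff] at hx1 hx2
  rw [EReal.coe_le_coe_iff]
  nlinarith

lemma liminf_combo {F : Filter ℝ} {q₁ q₂ : ℝ → ℝ} {c₁ c₂ θ : ℝ}
    (hθ0 : 0 ≤ θ) (hθ1 : θ ≤ 1)
    (H₁ : (c₁ : EReal) ≤ Filter.liminf (fun x => ((q₁ x : ℝ) : EReal)) F)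
    (H₂ : (c₂ : EReal) ≤ Filter.liminf (fun x => ((q₂ x : ℝ) : EReal)) F) :
    ((θ * c₁ + (1 - θ) * c₂ : ℝ) : EReal)
      ≤ Filter.liminf (fun x => ((θ * q₁ x + (1 - θ) * q₂ x : ℝ) : EReal)) F := by
  have key : ∀ ε : ℝ, 0 < ε →
      ((θ * c₁ + (1 - θ) * c₂ - ε : ℝ) : EReal)
        ≤ Filter.liminf (fun x => ((θ * q₁ x + (1 - θ) * q₂ x : ℝ) : EReal)) F := by
    intro ε hε
    have e₁ : ∀ᶠ x in F, ((c₁ - ε : ℝ) : EReal) < ((q₁ x : ℝ) : EReal) :=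
      eventually_lt_of_lt_liminf (lt_of_lt_of_le (by exact_mod_cast sub_lt_self c₁ hε) H₁)
    have e₂ : ∀ᶠ x in F, ((c₂ - ε : ℝ) : EReal) < ((q₂ x : ℝ) : EReal) :=
      eventually_lt_of_lt_liminf (lt_of_lt_of_le (by exact_mod_cast sub_lt_self c₂ hε) H₂)
    refine le_liminf_of_le (by isBoundedDefault) ?_
    filter_upwards [e₁, e₂] with x hx1 hx2
    rw [EReal.coe_lt_coe_iff] at hx1 hx2
    rw [EReal.coe_le_coe_iff]
    nlinarith
  by_contra hc
  push_neg at hc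
  obtain ⟨d, hdx, hdc⟩ := EReal.exists_between_coe_real hc
  have hlt : d < θ * c₁ + (1 - θ) * c₂ := EReal.coe_lt_coe_iff.mp hdc
  have hkey := key (θ * c₁ + (1 - θ) * c₂ - d) (by linarith)
  have hdl : (d : EReal) ≤ Filter.liminf (fun x => ((θ * q₁ x + (1 - θ) * q₂ x : ℝ) : EReal)) F := by
    simpa using hkey
  exact absurd hdl (not_le.mpr hdx)

theorem stmt_11 (a b B ξ : ℝ) (hab : a < b) (hB : 0 < B) (hξ : 0 ≤ ξ)
    (Bl Bu : ℝ → ℝ) (fm fp : ℝ → ℝ → ℝ)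
    (hBl : ContinuousOn Bl (Set.Icc a b)) (hBu : ContinuousOn Bu (Set.Icc a b))
    (hBlu : ∀ s ∈ Set.Icc a b, Bl s ≤ Bu s)
    (hle : ∀ s ∈ Set.Icc a b, ∀ y ∈ Set.Icc (Bl s) (Bu s), fm s y ≤ fp s y)
    (hbd : ∀ s ∈ Set.Icc a b, ∀ y ∈ Set.Icc (Bl s) (Bu s), |fm s y| ≤ B ∧ |fp s y| ≤ B)
    (hconc : ∀ s ∈ Set.Icc a b, ConcaveOn ℝ (Set.Icc (Bl s) (Bu s)) (fp s))
    (hconv : ∀ s ∈ Set.Icc a b, ConvexOn ℝ (Set.Icc (Bl s) (Bu s)) (fm s))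
    (h₁ h₂ : ℝ → ℝ) (θ : ℝ) (hθ : θ ∈ Set.Icc (0:ℝ) 1)
    (hf₁ : XiFeasible a b Bl Bu fm fp ξ h₁)
    (hf₂ : XiFeasible a b Bl Bu fm fp ξ h₂) :
    XiFeasible a b Bl Bu fm fp ξ (fun s => θ * h₁ s + (1 - θ) * h₂ s) := by
  obtain ⟨hθ0, hθ1⟩ := hθ
  obtain ⟨hc₁, hb₁, hd₁⟩ := hf₁
  obtain ⟨hc₂, hb₂, hd₂⟩ := hf₂
  refine ⟨((continuousOn_const.mul hc₁).add (continuousOn_const.mul hc₂)), ?_, ?_⟩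
  · intro s hs
    obtain ⟨l₁, u₁⟩ := hb₁ s hs
    obtain ⟨l₂, u₂⟩ := hb₂ s hs
    constructor
    · simp only
      nlinarith [mul_nonneg hθ0 (sub_nonneg.mpr l₁), mul_nonneg (by linarith : (0:ℝ) ≤ 1 - θ) (sub_nonneg.mpr l₂)]
    · simp only
      nlinarith [mul_nonneg hθ0 (sub_nonneg.mpr u₁), mul_nonneg (by linarith : (0:ℝ) ≤ 1 - θ) (sub_nonneg.mpr u₂)]
  · intro s hs
    have hsab : s ∈ Set.Icc a b := Set.Ico_subset_Icc_self hs
    have m₁ : h₁ s ∈ Set.Icc (Bl s) (Bu s) := ⟨(hb₁ s hsab).1, (hb₁ s hsab).2⟩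
    have m₂ : h₂ s ∈ Set.Icc (Bl s) (Bu s) := ⟨(hb₂ s hsab).1, (hb₂ s hsab).2⟩
    have hq : ∀ h₁ h₂ : ℝ → ℝ, (fun s' : ℝ =>
        ((((θ * h₁ s' + (1 - θ) * h₂ s') - (θ * h₁ s + (1 - θ) * h₂ s)) / (s' - s) : ℝ) : EReal))
        = fun s' => ((θ * ((h₁ s' - h₁ s) / (s' - s))
            + (1 - θ) * ((h₂ s' - h₂ s) / (s' - s)) : ℝ) : EReal) := by
      intro h₁ h₂
      funext s'
      norm_cast
      rw [mul_div_assoc', mul_div_assoc', ← add_div]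
      ring_nf
    constructor
    · have conv := (hconv s hsab).2 m₁ m₂ (show (0:ℝ) ≤ θ from hθ0) (show (0:ℝ) ≤ 1 - θ by linarith) (show θ + (1 - θ) = 1 by ring)
      simp only [smul_eq_mul] at conv
      have key := liminf_combo (F := nhdsWithin s (Set.Ioi s))
        (q₁ := fun s' => (h₁ s' - h₁ s) / (s' - s)) (q₂ := fun s' => (h₂ s' - h₂ s) / (s' - s))
        hθ0 hθ1 ((hd₁ s hs).1) ((hd₂ s hs).1)
      unfold DiniLower at key ⊢
      rw [hq h₁ h₂]
      refine le_trans ?_ key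
      rw [EReal.coe_le_coe_iff]
      simp only
      nlinarith
    · have conc := (hconc s hsab).2 m₁ m₂ (show (0:ℝ) ≤ θ from hθ0) (show (0:ℝ) ≤ 1 - θ by linarith) (show θ + (1 - θ) = 1 by ring)
      simp only [smul_eq_mul] at conc
      have key := limsup_combo (F := nhdsWithin s (Set.Ioi s))
        (q₁ := fun s' => (h₁ s' - h₁ s) / (s' - s)) (q₂ := fun s' => (h₂ s' - h₂ s) / (s' - s))
        hθ0 hθ1 ((hd₁ s hs).2) ((hd₂ s hs).2)
      unfold DiniUpper at key ⊢
      rw [hq h₁ h₂]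
      refine le_trans key ?_
      rw [EReal.coe_le_coe_iff]
      simp only
      nlinarith
end

section
/- Any function h : [a,b] → ℝ satisfying D⁺h(s) ≤ f⁺(s,h(s)) + ξ and D⁻h(s) ≥ f⁻(s,h(s)) − ξ for all s ∈ [a,b), where |f^±| ≤ B on the relevant region and h is continuous with B_l ≤ h ≤ B_u, is (B+ξ)-Lipschitz on [a,b]. -/
open Filter Set

/-! Along the curve the bounds on `f±` give `D⁺h ≤ B + ξ` and `D⁺(-h) = -D⁻h ≤ B + ξ`. A continuous
function whose upper right Dini derivative is at most `C` lies below the line of slope `C` through its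
initial value, so `h` and `-h` both grow at rate at most `B + ξ`. -/

open Topology

lemma diniUpper_neg (h : ℝ → ℝ) (s : ℝ) : DiniUpper (-h) s = -DiniLower h s := by
  rw [DiniUpper, DiniLower, ← EReal.limsup_neg]
  congr 1
  funext s'
  simp only [Pi.neg_apply, ← EReal.coe_neg]
  congr 1
  ring

lemma frequently_slope_lt_of_diniUpper_le {h : ℝ → ℝ} {x C r : ℝ} (hD : DiniUpper h x ≤ C)
    (hr : C < r) : ∃ᶠ z in 𝓝[>] x, slope h x z < r := by
  have hlt : DiniUpper h x < r := hD.trans_lt (EReal.coe_lt_coe_iff.2 hr)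
  refine (eventually_lt_of_limsup_lt hlt).mono (fun z hz => ?_) |>.frequently
  rw [slope_def_field]
  exact_mod_cast hz

lemma sub_le_mul_sub_of_diniUpper_le {h : ℝ → ℝ} {a b C : ℝ} (hcont : ContinuousOn h (Icc a b))
    (hab : a ≤ b) (hD : ∀ x ∈ Ico a b, DiniUpper h x ≤ C) : h b - h a ≤ C * (b - a) := by
  have hle := image_le_of_liminf_slope_right_le_deriv_boundary hcont
    (B := fun x => h a + C * (x - a)) (by simp) (by fun_prop)
    (fun x _ => by
      simpa using (((hasDerivWithinAt_id x (Ici x)).sub_const a).const_mul C).const_add (h a))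
    (fun x hx _ hr => frequently_slope_lt_of_diniUpper_le (hD x hx) hr)
    (right_mem_Icc.2 hab)
  linarith

lemma abs_sub_le_mul_of_dini_bounds {h : ℝ → ℝ} {a b C : ℝ} (hcont : ContinuousOn h (Icc a b))
    (hU : ∀ x ∈ Ico a b, DiniUpper h x ≤ C) (hL : ∀ x ∈ Ico a b, ((-C : ℝ) : EReal) ≤ DiniLower h x)
    {s t : ℝ} (hs : s ∈ Icc a b) (ht : t ∈ Icc a b) : |h s - h t| ≤ C * |s - t| := by
  wlog hst : s ≤ t generalizing s t
  · rw [abs_sub_comm, abs_sub_comm s]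
    exact this ht hs (le_of_not_ge hst)
  have hsub : Ico s t ⊆ Ico a b := Ico_subset_Ico hs.1 ht.2
  have hcont' : ContinuousOn h (Icc s t) := hcont.mono (Icc_subset_Icc hs.1 ht.2)
  have hup := sub_le_mul_sub_of_diniUpper_le hcont' hst fun x hx => hU x (hsub hx)
  have hdown := sub_le_mul_sub_of_diniUpper_le hcont'.neg hst fun x hx => by
    rw [diniUpper_neg, EReal.neg_le, ← EReal.coe_neg]
    exact hL x (hsub hx)
  rw [abs_sub_comm, abs_sub_comm s, abs_of_nonneg (sub_nonneg.2 hst), abs_le]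
  simp only [Pi.neg_apply] at hdown
  constructor <;> linarith

theorem stmt_12_general (a b B ξ : ℝ)
    (Bl Bu : ℝ → ℝ) (fm fp : ℝ → ℝ → ℝ)
    (hbd : ∀ s ∈ Set.Icc a b, ∀ y ∈ Set.Icc (Bl s) (Bu s), |fm s y| ≤ B ∧ |fp s y| ≤ B)
    (h : ℝ → ℝ) (hcont : ContinuousOn h (Set.Icc a b))
    (hbounds : ∀ s ∈ Set.Icc a b, Bl s ≤ h s ∧ h s ≤ Bu s)
    (hdini : ∀ s ∈ Set.Ico a b,
      ((fm s (h s) - ξ : ℝ) : EReal) ≤ DiniLower h s ∧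
      DiniUpper h s ≤ ((fp s (h s) + ξ : ℝ) : EReal)) :
    ∀ s ∈ Set.Icc a b, ∀ t ∈ Set.Icc a b, |h s - h t| ≤ (B + ξ) * |s - t| := by
  have hf : ∀ x ∈ Ico a b, |fm x (h x)| ≤ B ∧ |fp x (h x)| ≤ B := fun x hx =>
    hbd x (Ico_subset_Icc_self hx) (h x) (hbounds x (Ico_subset_Icc_self hx))
  refine fun s hs t ht => abs_sub_le_mul_of_dini_bounds hcont (fun x hx => ?_) (fun x hx => ?_) hs ht
  · refine (hdini x hx).2.trans (EReal.coe_le_coe_iff.2 ?_)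
    linarith [(abs_le.1 (hf x hx).2).2]
  · refine (EReal.coe_le_coe_iff.2 ?_).trans (hdini x hx).1
    linarith [(abs_le.1 (hf x hx).1).1]

theorem stmt_12 (a b B ξ : ℝ) (hab : a < b) (hB : 0 < B) (hξ : 0 ≤ ξ)
    (Bl Bu : ℝ → ℝ) (fm fp : ℝ → ℝ → ℝ)
    (hbd : ∀ s ∈ Set.Icc a b, ∀ y ∈ Set.Icc (Bl s) (Bu s), |fm s y| ≤ B ∧ |fp s y| ≤ B)
    (h : ℝ → ℝ) (hcont : ContinuousOn h (Set.Icc a b))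
    (hbounds : ∀ s ∈ Set.Icc a b, Bl s ≤ h s ∧ h s ≤ Bu s)
    (hdini : ∀ s ∈ Set.Ico a b,
      ((fm s (h s) - ξ : ℝ) : EReal) ≤ DiniLower h s ∧
      DiniUpper h s ≤ ((fp s (h s) + ξ : ℝ) : EReal)) :
    ∀ s ∈ Set.Icc a b, ∀ t ∈ Set.Icc a b, |h s - h t| ≤ (B + ξ) * |s - t| :=
  stmt_12_general a b B ξ Bl Bu fm fp hbd h hcont hbounds hdini
end

section
/- Let A_ξ denote the set of ξ-feasible functions and assume A_0 ≠ ∅. Define h̄_ξ = pointwise supremum over A_ξ. Then h̄_ξ converges uniformly to h̄_0 on [a,b] as ξ ↓ 0. -/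
open Filter Set

noncomputable def hbar (a b : ℝ) (Bl Bu : ℝ → ℝ) (fm fp : ℝ → ℝ → ℝ) (ξ : ℝ) (s : ℝ) : ℝ :=
  sSup {y : ℝ | ∃ h : ℝ → ℝ, XiFeasible a b Bl Bu fm fp ξ h ∧ h s = y}

/-- helper : from `DiniUpper h x ≤ f' x` get the frequent-slope condition. -/
lemma freq_slope_of_diniUpper {h : ℝ → ℝ} {x : ℝ} {v : ℝ}
    (hD : DiniUpper h x ≤ (v : EReal)) :
    ∀ r, v < r → ∃ᶠ z in nhdsWithin x (Set.Ioi x), slope h x z < r := by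
  intro r hr
  have hlt : DiniUpper h x < (r : EReal) := lt_of_le_of_lt hD (by exact_mod_cast hr)
  have hev : ∀ᶠ z in nhdsWithin x (Set.Ioi x),
      (((h z - h x) / (z - x) : ℝ) : EReal) < (r : EReal) :=
    Filter.eventually_lt_of_limsup_lt hlt
  refine (hev.mono ?_).frequently
  intro z hz
  rw [slope_def_field]
  exact_mod_cast hz

lemma freq_slope_neg_of_diniLower {h : ℝ → ℝ} {x : ℝ} {v : ℝ}
    (hD : ((v : ℝ) : EReal) ≤ DiniLower h x) :
    ∀ r, -v < r → ∃ᶠ z in nhdsWithin x (Set.Ioi x), slope (fun y => -h y) x z < r := by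
  intro r hr
  have hlt : ((-r : ℝ) : EReal) < DiniLower h x :=
    lt_of_lt_of_le (by exact_mod_cast (by linarith : -r < v)) hD
  have hev : ∀ᶠ z in nhdsWithin x (Set.Ioi x),
      ((-r : ℝ) : EReal) < (((h z - h x) / (z - x) : ℝ) : EReal) :=
    Filter.eventually_lt_of_lt_liminf hlt
  refine (hev.mono ?_).frequently
  intro z hz
  have hz' : (-r : ℝ) < (h z - h x) / (z - x) := by exact_mod_cast hz
  rw [slope_def_field]
  have : (-h z - -h x) / (z - x) = -((h z - h x) / (z - x)) := by ring
  rw [this]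
  linarith

/-- Growth lemma, upper version. -/
lemma growth_upper {h : ℝ → ℝ} {s u M c : ℝ} {f' : ℝ → ℝ}
    (hcont : ContinuousOn h (Set.Icc s u))
    (hDini : ∀ x ∈ Set.Ico s u, DiniUpper h x ≤ ((f' x : ℝ) : EReal))
    (hM : h s ≤ M)
    (hc : ∀ x ∈ Set.Ico s u, h x = M + c * (x - s) → f' x < c) :
    ∀ t ∈ Set.Icc s u, h t ≤ M + c * (t - s) := by
  intro t ht
  have := image_le_of_liminf_slope_right_lt_deriv_boundary (f := h) (f' := f')
    (a := s) (b := u) hcont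
    (fun x hx r hr => freq_slope_of_diniUpper (hDini x hx) r hr)
    (B := fun x => M + c * (x - s)) (B' := fun _ => c)
    (by simpa using hM)
    (fun x => by
      simpa using (((hasDerivAt_id x).sub_const s).const_mul c).const_add M)
    hc
  exact this ht

/-- Growth lemma, lower version. -/
lemma growth_lower {h : ℝ → ℝ} {s u m c : ℝ} {f' : ℝ → ℝ}
    (hcont : ContinuousOn h (Set.Icc s u))
    (hDini : ∀ x ∈ Set.Ico s u, ((f' x : ℝ) : EReal) ≤ DiniLower h x)
    (hm : m ≤ h s)
    (hc : ∀ x ∈ Set.Ico s u, h x = m + c * (x - s) → c < f' x) :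
    ∀ t ∈ Set.Icc s u, m + c * (t - s) ≤ h t := by
  intro t ht
  have key := image_le_of_liminf_slope_right_lt_deriv_boundary
    (f := fun y => -h y) (f' := fun x => -f' x) (a := s) (b := u)
    (hcont.neg)
    (fun x hx r hr => freq_slope_neg_of_diniLower (hDini x hx) r hr)
    (B := fun x => -m + (-c) * (x - s)) (B' := fun _ => -c)
    (by simpa using hm)
    (fun x => by
      simpa using (((hasDerivAt_id x).sub_const s).const_mul (-c)).const_add (-m))
    (fun x hx hx' => by
      have hx'' : -h x = -m + -c * (x - s) := hx'
      have h1 : h x = m + c * (x - s) := by linarith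
      have h2 := hc x hx h1
      show -f' x < -c
      linarith)
  have := key ht
  linarith

/-- EReal helper: `x ≤ c + η` for all `η > 0` implies `x ≤ c`. -/
lemma ereal_le_coe_of_forall {x : EReal} {c : ℝ}
    (h : ∀ η : ℝ, 0 < η → x ≤ ((c + η : ℝ) : EReal)) : x ≤ (c : EReal) := by
  induction x using EReal.rec with
  | bot => exact bot_le
  | coe r =>
    have : ∀ η : ℝ, 0 < η → r ≤ c + η := by
      intro η hη; exact_mod_cast h η hη
    exact_mod_cast le_of_forall_pos_le_add fun ε hε => this ε hε
  | top =>
    exfalso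
    exact (EReal.coe_lt_top (c + 1)).not_ge (h 1 one_pos)

lemma coe_le_ereal_of_forall {x : EReal} {c : ℝ}
    (h : ∀ η : ℝ, 0 < η → ((c - η : ℝ) : EReal) ≤ x) : (c : EReal) ≤ x := by
  induction x using EReal.rec with
  | bot =>
    exfalso
    exact (EReal.bot_lt_coe (c - 1)).not_ge (h 1 one_pos)
  | coe r =>
    have : ∀ η : ℝ, 0 < η → c - η ≤ r := by
      intro η hη; exact_mod_cast h η hη
    have : ∀ η : ℝ, 0 < η → c ≤ r + η := fun η hη => by linarith [this η hη]
    exact_mod_cast le_of_forall_pos_le_add fun ε hε => this ε hε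
  | top => exact le_top

lemma diniUpper_le_of_eventually {h : ℝ → ℝ} {s v : ℝ}
    (hev : ∀ᶠ t in nhdsWithin s (Set.Ioi s), (h t - h s) / (t - s) ≤ v) :
    DiniUpper h s ≤ ((v : ℝ) : EReal) := by
  refine Filter.limsup_le_of_le (by isBoundedDefault) ?_
  exact hev.mono fun t ht => by exact_mod_cast ht

lemma le_diniLower_of_eventually {h : ℝ → ℝ} {s v : ℝ}
    (hev : ∀ᶠ t in nhdsWithin s (Set.Ioi s), v ≤ (h t - h s) / (t - s)) :
    ((v : ℝ) : EReal) ≤ DiniLower h s := by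
  refine Filter.le_liminf_of_le (by isBoundedDefault) ?_
  exact hev.mono fun t ht => by exact_mod_cast ht

/-- Lipschitz-type bound implies continuity on a set. -/
lemma continuousOn_of_lip {f : ℝ → ℝ} {I : Set ℝ} {K : ℝ} (hK : 0 ≤ K)
    (hlip : ∀ s ∈ I, ∀ t ∈ I, |f t - f s| ≤ K * |t - s|) : ContinuousOn f I := by
  refine LipschitzOnWith.continuousOn (K := Real.toNNReal K) ?_
  rw [lipschitzOnWith_iff_dist_le_mul]
  intro x hx y hy
  rw [Real.dist_eq, Real.dist_eq, Real.coe_toNNReal K hK]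
  exact hlip y hy x hx

theorem stmt_13 (a b B : ℝ) (hab : a < b) (hB : 0 < B)
    (Bl Bu : ℝ → ℝ) (fm fp : ℝ → ℝ → ℝ)
    (hBl : ContinuousOn Bl (Set.Icc a b)) (hBu : ContinuousOn Bu (Set.Icc a b))
    (hBlu : ∀ s ∈ Set.Icc a b, Bl s ≤ Bu s)
    (hfmc : ContinuousOn (fun p : ℝ × ℝ => fm p.1 p.2)
      {p : ℝ × ℝ | p.1 ∈ Set.Icc a b ∧ Bl p.1 ≤ p.2 ∧ p.2 ≤ Bu p.1})
    (hfpc : ContinuousOn (fun p : ℝ × ℝ => fp p.1 p.2)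
      {p : ℝ × ℝ | p.1 ∈ Set.Icc a b ∧ Bl p.1 ≤ p.2 ∧ p.2 ≤ Bu p.1})
    (hle : ∀ s ∈ Set.Icc a b, ∀ y ∈ Set.Icc (Bl s) (Bu s), fm s y ≤ fp s y)
    (hbd : ∀ s ∈ Set.Icc a b, ∀ y ∈ Set.Icc (Bl s) (Bu s), |fm s y| ≤ B ∧ |fp s y| ≤ B)
    (hA0 : ∃ h : ℝ → ℝ, XiFeasible a b Bl Bu fm fp 0 h) :
    ∀ ε > 0, ∃ ξ₀ > 0, ∀ ξ : ℝ, 0 < ξ → ξ ≤ ξ₀ →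
      ∀ s ∈ Set.Icc a b,
        |hbar a b Bl Bu fm fp ξ s - hbar a b Bl Bu fm fp 0 s| ≤ ε := by
  classical
  set F : Set (ℝ × ℝ) := {p : ℝ × ℝ | p.1 ∈ Set.Icc a b ∧ Bl p.1 ≤ p.2 ∧ p.2 ≤ Bu p.1} with hF
  set A : ℝ → (ℝ → ℝ) → Prop := fun ξ h => XiFeasible a b Bl Bu fm fp ξ h with hA
  set hb : ℝ → ℝ → ℝ := hbar a b Bl Bu fm fp with hhb
  obtain ⟨h₀, hh₀⟩ := hA0
  -- compactness of the tube
  have hFcomp : IsCompact F := by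
    obtain ⟨MB, hMB⟩ := (isCompact_Icc.image_of_continuousOn hBu).bddAbove
    obtain ⟨mB, hmB⟩ := (isCompact_Icc.image_of_continuousOn hBl).bddBelow
    have hsub : F ⊆ Set.Icc a b ×ˢ Set.Icc mB MB := by
      rintro ⟨s, y⟩ ⟨hs, h1, h2⟩
      exact ⟨hs, le_trans (hmB ⟨s, hs, rfl⟩) h1, le_trans h2 (hMB ⟨s, hs, rfl⟩)⟩
    refine (isCompact_Icc.prod isCompact_Icc).of_isClosed_subset ?_ hsub
    have hcl : IsClosed ((Set.Icc a b ×ˢ (Set.univ : Set ℝ)) ∩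
        ((fun p : ℝ × ℝ => (Bl p.1 - p.2, p.2 - Bu p.1)) ⁻¹' (Set.Iic 0 ×ˢ Set.Iic 0))) := by
      apply ContinuousOn.preimage_isClosed_of_isClosed
      · apply ContinuousOn.prodMk
        · exact (hBl.comp continuous_fst.continuousOn (fun p hp => hp.1)).sub
            continuous_snd.continuousOn
        · exact continuous_snd.continuousOn.sub
            (hBu.comp continuous_fst.continuousOn (fun p hp => hp.1))
      · exact (isClosed_Icc.prod isClosed_univ)
      · exact isClosed_Iic.prod isClosed_Iic
    convert hcl using 1
    ext ⟨s, y⟩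
    simp only [hF, Set.mem_setOf_eq, Set.mem_inter_iff, Set.mem_prod, Set.mem_preimage,
      Set.mem_Iic, Set.mem_univ, and_true]
    constructor
    · rintro ⟨hs, h1, h2⟩; exact ⟨hs, by linarith, by linarith⟩
    · rintro ⟨hs, h1, h2⟩; exact ⟨hs, by linarith, by linarith⟩
  -- joint uniform-continuity modulus for fm and fp on F
  have hmod : ∀ η : ℝ, 0 < η → ∃ δ : ℝ, 0 < δ ∧ ∀ p ∈ F, ∀ q ∈ F,
      |p.1 - q.1| ≤ δ → |p.2 - q.2| ≤ δ →
      |fm p.1 p.2 - fm q.1 q.2| ≤ η ∧ |fp p.1 p.2 - fp q.1 q.2| ≤ η := by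
    intro η hη
    obtain ⟨δ1, hδ1, H1⟩ := Metric.uniformContinuousOn_iff_le.1
      (hFcomp.uniformContinuousOn_of_continuous hfmc) η hη
    obtain ⟨δ2, hδ2, H2⟩ := Metric.uniformContinuousOn_iff_le.1
      (hFcomp.uniformContinuousOn_of_continuous hfpc) η hη
    refine ⟨min δ1 δ2, lt_min hδ1 hδ2, fun p hp q hq hd1 hd2 => ?_⟩
    have hdist : dist p q ≤ min δ1 δ2 := by
      rw [Prod.dist_eq]
      exact max_le (by rwa [Real.dist_eq]) (by rwa [Real.dist_eq])
    constructor
    · have := H1 p hp q hq (le_trans hdist (min_le_left _ _))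
      rwa [Real.dist_eq] at this
    · have := H2 p hp q hq (le_trans hdist (min_le_right _ _))
      rwa [Real.dist_eq] at this
  -- monotonicity of feasibility in ξ
  have hAmono : ∀ ξ ξ' : ℝ, ξ ≤ ξ' → ∀ h, A ξ h → A ξ' h := by
    intro ξ ξ' hξξ' h hfe
    refine ⟨hfe.1, hfe.2.1, fun s hs => ?_⟩
    obtain ⟨hl, hu⟩ := hfe.2.2 s hs
    constructor
    · exact le_trans (by exact_mod_cast (by linarith : fm s (h s) - ξ' ≤ fm s (h s) - ξ)) hl
    · exact le_trans hu (by exact_mod_cast (by linarith : fp s (h s) + ξ ≤ fp s (h s) + ξ'))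
  have hA0' : A 0 h₀ := hh₀
  -- basic sSup facts
  have hSbdd : ∀ ξ : ℝ, ∀ s ∈ Set.Icc a b,
      BddAbove {y : ℝ | ∃ h, A ξ h ∧ h s = y} := by
    intro ξ s hs
    exact ⟨Bu s, by rintro y ⟨h, hfe, rfl⟩; exact (hfe.2.1 s hs).2⟩
  have hSne : ∀ ξ : ℝ, 0 ≤ ξ → ∀ s : ℝ, {y : ℝ | ∃ h, A ξ h ∧ h s = y}.Nonempty :=
    fun ξ hξ s => ⟨h₀ s, h₀, hAmono 0 ξ hξ h₀ hA0', rfl⟩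
  have hble : ∀ ξ : ℝ, ∀ h, A ξ h → ∀ s ∈ Set.Icc a b, h s ≤ hb ξ s :=
    fun ξ h hfe s hs => le_csSup (hSbdd ξ s hs) ⟨h, hfe, rfl⟩
  have hbmono : ∀ ξ ξ' : ℝ, 0 ≤ ξ → ξ ≤ ξ' → ∀ s ∈ Set.Icc a b, hb ξ s ≤ hb ξ' s := by
    intro ξ ξ' hξ hξξ' s hs
    exact csSup_le_csSup (hSbdd ξ' s hs) (hSne ξ hξ s)
      (by rintro y ⟨h, hfe, rfl⟩; exact ⟨h, hAmono ξ ξ' hξξ' h hfe, rfl⟩)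
  have hbmem : ∀ ξ : ℝ, 0 ≤ ξ → ∀ s ∈ Set.Icc a b, Bl s ≤ hb ξ s ∧ hb ξ s ≤ Bu s := by
    intro ξ hξ s hs
    constructor
    · exact le_trans ((hAmono 0 ξ hξ h₀ hA0').2.1 s hs).1 (hble ξ h₀ (hAmono 0 ξ hξ h₀ hA0') s hs)
    · exact csSup_le (hSne ξ hξ s) (by rintro y ⟨h, hfe, rfl⟩; exact (hfe.2.1 s hs).2)
  obtain ⟨K, hK⟩ : ∃ K : ℝ, K = B + 2 := ⟨B + 2, rfl⟩
  have hKpos : 0 < K := by rw [hK]; linarith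
  -- every ξ-feasible function is K-Lipschitz (ξ ≤ 1)
  have hfeasLip : ∀ ξ ∈ Set.Icc (0:ℝ) 1, ∀ h, A ξ h →
      ∀ s ∈ Set.Icc a b, ∀ t ∈ Set.Icc a b, s ≤ t → |h t - h s| ≤ K * (t - s) := by
    intro ξ hξ h hfe s hs t ht hst
    have hIcc : Set.Icc s t ⊆ Set.Icc a b := Set.Icc_subset_Icc hs.1 ht.2
    have hIco : Set.Ico s t ⊆ Set.Ico a b := Set.Ico_subset_Ico hs.1 ht.2
    have hmemF : ∀ x ∈ Set.Ico s t, x ∈ Set.Icc a b ∧ h x ∈ Set.Icc (Bl x) (Bu x) := by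
      intro x hx
      have hx' : x ∈ Set.Icc a b := hIcc (Set.Ico_subset_Icc_self hx)
      exact ⟨hx', ⟨(hfe.2.1 x hx').1, (hfe.2.1 x hx').2⟩⟩
    have hup : ∀ t' ∈ Set.Icc s t, h t' ≤ h s + K * (t' - s) := by
      apply growth_upper (f' := fun x => fp x (h x) + ξ) (hfe.1.mono hIcc)
        (fun x hx => (hfe.2.2 x (hIco hx)).2) le_rfl
      intro x hx _
      obtain ⟨hx1, hx2⟩ := hmemF x hx
      have := (hbd x hx1 (h x) hx2).2
      have := abs_le.1 this
      rw [hK]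
      linarith [hξ.2, this.2]
    have hdn : ∀ t' ∈ Set.Icc s t, h s + (-K) * (t' - s) ≤ h t' := by
      apply growth_lower (f' := fun x => fm x (h x) - ξ) (hfe.1.mono hIcc)
        (fun x hx => (hfe.2.2 x (hIco hx)).1) le_rfl
      intro x hx _
      obtain ⟨hx1, hx2⟩ := hmemF x hx
      have := (hbd x hx1 (h x) hx2).1
      have := abs_le.1 this
      rw [hK]
      linarith [hξ.2, this.1]
    have h1 := hup t ⟨hst, le_rfl⟩
    have h2 := hdn t ⟨hst, le_rfl⟩
    rw [abs_le]
    constructor <;> nlinarith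
  -- hb is K-Lipschitz
  have hbkey : ∀ ξ ∈ Set.Icc (0:ℝ) 1, ∀ s ∈ Set.Icc a b, ∀ t ∈ Set.Icc a b, s ≤ t →
      hb ξ t ≤ hb ξ s + K * (t - s) ∧ hb ξ s ≤ hb ξ t + K * (t - s) := by
    intro ξ hξ s hs t ht hst
    constructor
    · apply csSup_le (hSne ξ hξ.1 t)
      rintro y ⟨h, hfe, rfl⟩
      have h1 := abs_le.1 (hfeasLip ξ hξ h hfe s hs t ht hst)
      linarith [hble ξ h hfe s hs, h1.2]
    · apply csSup_le (hSne ξ hξ.1 s)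
      rintro y ⟨h, hfe, rfl⟩
      have h1 := abs_le.1 (hfeasLip ξ hξ h hfe s hs t ht hst)
      linarith [hble ξ h hfe t ht, h1.1]
  have hbLip : ∀ ξ ∈ Set.Icc (0:ℝ) 1, ∀ s ∈ Set.Icc a b, ∀ t ∈ Set.Icc a b,
      |hb ξ t - hb ξ s| ≤ K * |t - s| := by
    intro ξ hξ s hs t ht
    rcases le_total s t with hst | hst
    · have h1 := hbkey ξ hξ s hs t ht hst
      rw [abs_of_nonneg (by linarith : (0:ℝ) ≤ t - s), abs_le]
      exact ⟨by linarith [h1.2], by linarith [h1.1]⟩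
    · have h1 := hbkey ξ hξ t ht s hs hst
      rw [abs_of_nonpos (by linarith : t - s ≤ 0), abs_le]
      exact ⟨by linarith [h1.1], by linarith [h1.2]⟩
  -- the limit function
  set g : ℝ → ℝ := fun s => sInf ((fun ξ => hb ξ s) '' Set.Ioc (0:ℝ) 1) with hg
  have hgbdd : ∀ s ∈ Set.Icc a b, ∀ y ∈ (fun ξ => hb ξ s) '' Set.Ioc (0:ℝ) 1, hb 0 s ≤ y := by
    rintro s hs y ⟨ξ, hξ, rfl⟩
    exact hbmono 0 ξ le_rfl hξ.1.le s hs
  have hgne : ∀ s : ℝ, ((fun ξ => hb ξ s) '' Set.Ioc (0:ℝ) 1).Nonempty :=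
    fun s => ⟨hb 1 s, 1, ⟨one_pos, le_rfl⟩, rfl⟩
  have hgle : ∀ ξ ∈ Set.Ioc (0:ℝ) 1, ∀ s ∈ Set.Icc a b, g s ≤ hb ξ s :=
    fun ξ hξ s hs => csInf_le ⟨hb 0 s, hgbdd s hs⟩ ⟨ξ, hξ, rfl⟩
  have hg0 : ∀ s ∈ Set.Icc a b, hb 0 s ≤ g s :=
    fun s hs => le_csInf (hgne s) (hgbdd s hs)
  have hgmem : ∀ s ∈ Set.Icc a b, Bl s ≤ g s ∧ g s ≤ Bu s := by
    intro s hs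
    exact ⟨le_trans (hbmem 0 le_rfl s hs).1 (hg0 s hs),
      le_trans (hgle 1 ⟨one_pos, le_rfl⟩ s hs) (hbmem 1 zero_le_one s hs).2⟩
  have hgkey : ∀ s ∈ Set.Icc a b, ∀ t ∈ Set.Icc a b, s ≤ t →
      g t ≤ g s + K * (t - s) ∧ g s ≤ g t + K * (t - s) := by
    intro s hs t ht hst
    constructor
    · have : ∀ y ∈ (fun ξ => hb ξ s) '' Set.Ioc (0:ℝ) 1, g t - K * (t - s) ≤ y := by
        rintro y ⟨ξ, hξ, rfl⟩
        have h1 := (hbkey ξ ⟨hξ.1.le, hξ.2⟩ s hs t ht hst).1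
        have h2 := hgle ξ hξ t ht
        linarith
      linarith [le_csInf (hgne s) this]
    · have : ∀ y ∈ (fun ξ => hb ξ t) '' Set.Ioc (0:ℝ) 1, g s - K * (t - s) ≤ y := by
        rintro y ⟨ξ, hξ, rfl⟩
        have h1 := (hbkey ξ ⟨hξ.1.le, hξ.2⟩ s hs t ht hst).2
        have h2 := hgle ξ hξ s hs
        linarith
      linarith [le_csInf (hgne t) this]
  have hgLip : ∀ s ∈ Set.Icc a b, ∀ t ∈ Set.Icc a b, |g t - g s| ≤ K * |t - s| := by
    intro s hs t ht
    rcases le_total s t with hst | hst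
    · have h1 := hgkey s hs t ht hst
      rw [abs_of_nonneg (by linarith : (0:ℝ) ≤ t - s), abs_le]
      exact ⟨by linarith [h1.2], by linarith [h1.1]⟩
    · have h1 := hgkey t ht s hs hst
      rw [abs_of_nonpos (by linarith : t - s ≤ 0), abs_le]
      exact ⟨by linarith [h1.1], by linarith [h1.2]⟩
  -- pointwise convergence of hb ξ s to g s
  have hept : ∀ s ∈ Set.Icc a b, ∀ κ : ℝ, 0 < κ → ∀ ξub : ℝ, 0 < ξub →
      ∃ ξ : ℝ, 0 < ξ ∧ ξ ≤ 1 ∧ ξ ≤ ξub ∧ hb ξ s ≤ g s + κ := by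
    intro s hs κ hκ ξub hξub
    obtain ⟨y, ⟨ξ', hξ', rfl⟩, hlt⟩ := exists_lt_of_csInf_lt (hgne s) (lt_add_of_pos_right (g s) hκ)
    refine ⟨min ξ' ξub, lt_min hξ'.1 hξub, le_trans (min_le_left _ _) hξ'.2,
      min_le_right _ _, ?_⟩
    exact le_trans (hbmono _ ξ' (le_min hξ'.1.le hξub.le) (min_le_left _ _) s hs) hlt.le
  -- central upper estimate
  have claimU : ∀ η : ℝ, 0 < η → ∃ δ₁ : ℝ, 0 < δ₁ ∧ ∀ ξ ∈ Set.Icc (0:ℝ) 1, ∀ h, A ξ h →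
      ∀ s ∈ Set.Ico a b, ∀ y : ℝ, (s, y) ∈ F → h s ≤ y →
      ∀ t ∈ Set.Ioc s (min b (s + δ₁)), h t ≤ y + (fp s y + ξ + η) * (t - s) := by
    intro η hη
    obtain ⟨δ, hδ, Hmod⟩ := hmod (η/2) (by linarith)
    have hBη : (0:ℝ) < 2 * (B + 2 + η) := by linarith
    refine ⟨min (δ/2) (δ/(2*(B + 2 + η))), lt_min (by linarith) (by positivity), ?_⟩
    set δ₁ := min (δ/2) (δ/(2*(B + 2 + η))) with hδ₁def
    have hδ₁pos : 0 < δ₁ := lt_min (by linarith) (by positivity)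
    intro ξ hξ h hfe s hs y hyF hhsy t ht
    set u := min b (s + δ₁) with hu
    have hsu : s < u := lt_min hs.2 (by linarith)
    have hub : u ≤ b := min_le_left _ _
    have hIcc : Set.Icc s u ⊆ Set.Icc a b := Set.Icc_subset_Icc hs.1 hub
    have hIco : Set.Ico s u ⊆ Set.Ico a b := Set.Ico_subset_Ico hs.1 hub
    have hyB : |fp s y| ≤ B :=
      (hbd s ⟨hs.1, hs.2.le⟩ y ⟨hyF.2.1, hyF.2.2⟩).2
    have hyBabs := abs_le.1 hyB
    refine growth_upper (f' := fun x => fp x (h x) + ξ) (M := y) (c := fp s y + ξ + η)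
      (hfe.1.mono hIcc) (fun x hx => (hfe.2.2 x (hIco hx)).2) hhsy ?_ t
      (Set.Ioc_subset_Icc_self ht)
    intro x hx htouch
    have hx' : x ∈ Set.Icc a b := hIcc (Set.Ico_subset_Icc_self hx)
    have hhxF : (x, h x) ∈ F := ⟨hx', (hfe.2.1 x hx').1, (hfe.2.1 x hx').2⟩
    have hxs0 : 0 ≤ x - s := by linarith [hx.1]
    have hxs : x - s ≤ δ₁ := by
      have h1 : x < s + δ₁ := lt_of_lt_of_le hx.2 (min_le_right _ _)
      linarith
    have hδ₁a : δ₁ ≤ δ/2 := min_le_left _ _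
    have hδ₁b : δ₁ ≤ δ/(2*(B + 2 + η)) := min_le_right _ _
    have hd1 : |x - s| ≤ δ := by
      rw [abs_of_nonneg hxs0]; linarith
    have hcabs : |fp s y + ξ + η| ≤ B + 2 + η := by
      rw [abs_le]; constructor
      · linarith [hξ.1, hyBabs.1]
      · linarith [hξ.2, hyBabs.2]
    have hd2 : |h x - y| ≤ δ := by
      rw [htouch]
      have e1 : y + (fp s y + ξ + η) * (x - s) - y = (fp s y + ξ + η) * (x - s) := by ring
      rw [e1, abs_mul, abs_of_nonneg hxs0]
      calc |fp s y + ξ + η| * (x - s) ≤ (B + 2 + η) * δ₁ := by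
            apply mul_le_mul hcabs hxs hxs0 (by linarith)
        _ ≤ (B + 2 + η) * (δ/(2*(B + 2 + η))) := by
            apply mul_le_mul_of_nonneg_left hδ₁b (by linarith)
        _ = δ/2 := by field_simp
        _ ≤ δ := by linarith
    have hfpb := (Hmod (x, h x) hhxF (s, y) hyF hd1 hd2).2
    have := abs_le.1 hfpb
    show fp x (h x) + ξ < fp s y + ξ + η
    have h2 : fp x (h x) - fp s y ≤ η/2 := this.2
    linarith
  -- central lower estimate
  have claimL : ∀ η : ℝ, 0 < η → ∃ δ₁ : ℝ, 0 < δ₁ ∧ ∀ ξ ∈ Set.Icc (0:ℝ) 1, ∀ h, A ξ h →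
      ∀ s ∈ Set.Ico a b, ∀ y : ℝ, (s, y) ∈ F → y - δ₁ ≤ h s → h s ≤ y →
      ∀ t ∈ Set.Ioc s (min b (s + δ₁)), h s + (fm s y - ξ - η) * (t - s) ≤ h t := by
    intro η hη
    obtain ⟨δ, hδ, Hmod⟩ := hmod (η/2) (by linarith)
    have hBη : (0:ℝ) < 2 * (B + 3 + η) := by linarith
    refine ⟨min (δ/2) (δ/(2*(B + 3 + η))), lt_min (by linarith) (by positivity), ?_⟩
    set δ₁ := min (δ/2) (δ/(2*(B + 3 + η))) with hδ₁def
    have hδ₁pos : 0 < δ₁ := lt_min (by linarith) (by positivity)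
    intro ξ hξ h hfe s hs y hyF hylow hhsy t ht
    set u := min b (s + δ₁) with hu
    have hsu : s < u := lt_min hs.2 (by linarith)
    have hub : u ≤ b := min_le_left _ _
    have hIcc : Set.Icc s u ⊆ Set.Icc a b := Set.Icc_subset_Icc hs.1 hub
    have hIco : Set.Ico s u ⊆ Set.Ico a b := Set.Ico_subset_Ico hs.1 hub
    have hyB : |fm s y| ≤ B :=
      (hbd s ⟨hs.1, hs.2.le⟩ y ⟨hyF.2.1, hyF.2.2⟩).1
    have hyBabs := abs_le.1 hyB
    refine growth_lower (f' := fun x => fm x (h x) - ξ) (m := h s) (c := fm s y - ξ - η)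
      (hfe.1.mono hIcc) (fun x hx => (hfe.2.2 x (hIco hx)).1) le_rfl ?_ t
      (Set.Ioc_subset_Icc_self ht)
    intro x hx htouch
    have hx' : x ∈ Set.Icc a b := hIcc (Set.Ico_subset_Icc_self hx)
    have hhxF : (x, h x) ∈ F := ⟨hx', (hfe.2.1 x hx').1, (hfe.2.1 x hx').2⟩
    have hxs0 : 0 ≤ x - s := by linarith [hx.1]
    have hxs : x - s ≤ δ₁ := by
      have h1 : x < s + δ₁ := lt_of_lt_of_le hx.2 (min_le_right _ _)
      linarith
    have hδ₁a : δ₁ ≤ δ/2 := min_le_left _ _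
    have hδ₁b : δ₁ ≤ δ/(2*(B + 3 + η)) := min_le_right _ _
    have hd1 : |x - s| ≤ δ := by
      rw [abs_of_nonneg hxs0]; linarith
    have hcabs : |fm s y - ξ - η| ≤ B + 2 + η := by
      rw [abs_le]; constructor
      · linarith [hξ.2, hyBabs.1]
      · linarith [hξ.1, hyBabs.2]
    have hd2 : |h x - y| ≤ δ := by
      rw [htouch]
      have e1 : h s + (fm s y - ξ - η) * (x - s) - y
          = (h s - y) + (fm s y - ξ - η) * (x - s) := by ring
      rw [e1]
      have hhsyd : |h s - y| ≤ δ₁ := by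
        rw [abs_le]; exact ⟨by linarith, by linarith⟩
      calc |(h s - y) + (fm s y - ξ - η) * (x - s)|
          ≤ |h s - y| + |(fm s y - ξ - η) * (x - s)| := abs_add_le _ _
        _ ≤ δ₁ + (B + 2 + η) * δ₁ := by
            rw [abs_mul, abs_of_nonneg hxs0]
            have := mul_le_mul hcabs hxs hxs0 (by linarith : (0:ℝ) ≤ B + 2 + η)
            linarith
        _ = (B + 3 + η) * δ₁ := by ring
        _ ≤ (B + 3 + η) * (δ/(2*(B + 3 + η))) := by
            apply mul_le_mul_of_nonneg_left hδ₁b (by linarith)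
        _ = δ/2 := by field_simp
        _ ≤ δ := by linarith
    have hfmb := (Hmod (x, h x) hhxF (s, y) hyF hd1 hd2).1
    have := abs_le.1 hfmb
    show fm s y - ξ - η < fm x (h x) - ξ
    have h2 : fm x (h x) - fm s y ≥ -(η/2) := by linarith [this.1]
    linarith
  -- supremum version of the upper estimate
  have hbU : ∀ η : ℝ, 0 < η → ∃ δ₁ : ℝ, 0 < δ₁ ∧ ∀ ξ ∈ Set.Icc (0:ℝ) 1, ∀ s ∈ Set.Ico a b,
      ∀ t ∈ Set.Ioc s (min b (s + δ₁)), t ∈ Set.Icc a b →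
      hb ξ t ≤ hb ξ s + (fp s (hb ξ s) + ξ + η) * (t - s) := by
    intro η hη
    obtain ⟨δ₁, hδ₁, HU⟩ := claimU η hη
    refine ⟨δ₁, hδ₁, ?_⟩
    intro ξ hξ s hs t ht htIcc
    apply csSup_le (hSne ξ hξ.1 t)
    rintro y ⟨h, hfe, rfl⟩
    have hsIcc : s ∈ Set.Icc a b := ⟨hs.1, hs.2.le⟩
    have hyF : (s, hb ξ s) ∈ F :=
      ⟨hsIcc, (hbmem ξ hξ.1 s hsIcc).1, (hbmem ξ hξ.1 s hsIcc).2⟩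
    exact HU ξ hξ h hfe s hs (hb ξ s) hyF (hble ξ h hfe s hsIcc) t ht
  -- g is 0-feasible
  have hgU : ∀ s ∈ Set.Ico a b, DiniUpper g s ≤ ((fp s (g s) + 0 : ℝ) : EReal) := by
    intro s hs
    have hsIcc : s ∈ Set.Icc a b := ⟨hs.1, hs.2.le⟩
    rw [add_zero]
    apply ereal_le_coe_of_forall
    intro η hη
    have hη' : 0 < η/4 := by linarith
    obtain ⟨δ₁, hδ₁, HU⟩ := hbU (η/4) hη'
    obtain ⟨δ₂, hδ₂, Hmod₂⟩ := hmod (η/4) hη'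
    apply diniUpper_le_of_eventually
    have hsu : s < min b (s + δ₁) := lt_min hs.2 (by linarith)
    filter_upwards [Ioo_mem_nhdsGT_of_mem (Set.mem_Ico.2 ⟨le_rfl, hsu⟩)]
    intro t htIoo
    have hts : 0 < t - s := by linarith [htIoo.1]
    have htIcc : t ∈ Set.Icc a b := by
      constructor
      · linarith [hs.1, htIoo.1]
      · exact le_trans htIoo.2.le (min_le_left _ _)
    have hκpos : 0 < min δ₂ ((η/4) * (t - s)) := lt_min hδ₂ (by positivity)
    obtain ⟨ξ, hξpos, hξ1, hξη, hξκ⟩ := hept s hsIcc _ hκpos (η/4) hη'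
    have hκ1 : min δ₂ ((η/4) * (t - s)) ≤ δ₂ := min_le_left _ _
    have hκ2 : min δ₂ ((η/4) * (t - s)) ≤ (η/4) * (t - s) := min_le_right _ _
    have hgleξ := hgle ξ ⟨hξpos, hξ1⟩ s hsIcc
    have h1 : g t ≤ hb ξ t := hgle ξ ⟨hξpos, hξ1⟩ t htIcc
    have h2 : hb ξ t ≤ hb ξ s + (fp s (hb ξ s) + ξ + η/4) * (t - s) :=
      HU ξ ⟨hξpos.le, hξ1⟩ s hs t (Set.mem_Ioc.2 ⟨htIoo.1, htIoo.2.le⟩) htIcc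
    have hfpcomp : fp s (hb ξ s) ≤ fp s (g s) + η/4 := by
      have hp : (s, hb ξ s) ∈ F :=
        ⟨hsIcc, (hbmem ξ hξpos.le s hsIcc).1, (hbmem ξ hξpos.le s hsIcc).2⟩
      have hq : (s, g s) ∈ F := ⟨hsIcc, (hgmem s hsIcc).1, (hgmem s hsIcc).2⟩
      have hd2 : |hb ξ s - g s| ≤ δ₂ := by
        rw [abs_of_nonneg (by linarith : 0 ≤ hb ξ s - g s)]
        linarith
      have := (Hmod₂ (s, hb ξ s) hp (s, g s) hq (by simp [hδ₂.le]) hd2).2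
      linarith [(abs_le.1 this).2]
    have hcoef : (fp s (hb ξ s) + ξ + η/4) * (t - s) ≤ (fp s (g s) + 3 * (η/4)) * (t - s) := by
      apply mul_le_mul_of_nonneg_right _ hts.le
      linarith
    have hfinal : g t - g s ≤ (fp s (g s) + η) * (t - s) := by
      have hbs : hb ξ s ≤ g s + (η/4) * (t - s) := by linarith
      calc g t - g s ≤ hb ξ s + (fp s (g s) + 3 * (η/4)) * (t - s) - g s := by linarith
        _ ≤ (η/4) * (t - s) + (fp s (g s) + 3 * (η/4)) * (t - s) := by linarith
        _ = (fp s (g s) + η) * (t - s) := by ring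
    rw [div_le_iff₀ hts]
    exact hfinal
  have hgL : ∀ s ∈ Set.Ico a b, ((fm s (g s) - 0 : ℝ) : EReal) ≤ DiniLower g s := by
    intro s hs
    have hsIcc : s ∈ Set.Icc a b := ⟨hs.1, hs.2.le⟩
    rw [sub_zero]
    apply coe_le_ereal_of_forall
    intro η hη
    have hη' : 0 < η/4 := by linarith
    obtain ⟨δ₁, hδ₁, HL⟩ := claimL (η/4) hη'
    obtain ⟨δ₂, hδ₂, Hmod₂⟩ := hmod (η/4) hη'
    apply le_diniLower_of_eventually
    have hsu : s < min b (s + δ₁) := lt_min hs.2 (by linarith)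
    filter_upwards [Ioo_mem_nhdsGT_of_mem (Set.mem_Ico.2 ⟨le_rfl, hsu⟩)]
    intro t htIoo
    have hts : 0 < t - s := by linarith [htIoo.1]
    have htIcc : t ∈ Set.Icc a b := by
      constructor
      · linarith [hs.1, htIoo.1]
      · exact le_trans htIoo.2.le (min_le_left _ _)
    obtain ⟨ξ₁, hξ₁pos, hξ₁1, hξ₁η, hξ₁κ⟩ := hept s hsIcc δ₂ hδ₂ (η/4) hη'
    have hlow : g s + (fm s (g s) - η) * (t - s) ≤ g t := by
      apply le_csInf (hgne t)
      rintro yv ⟨ζ, hζ, rfl⟩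
      set ζ' := min ζ ξ₁ with hζ'def
      have hζ'pos : 0 < ζ' := lt_min hζ.1 hξ₁pos
      have hζ'1 : ζ' ≤ 1 := le_trans (min_le_left _ _) hζ.2
      have hζ'η : ζ' ≤ η/4 := le_trans (min_le_right _ _) hξ₁η
      have hmono1 : hb ζ' t ≤ hb ζ t := hbmono ζ' ζ hζ'pos.le (min_le_left _ _) t htIcc
      have hbs' : hb ζ' s ≤ g s + δ₂ :=
        le_trans (hbmono ζ' ξ₁ hζ'pos.le (min_le_right _ _) s hsIcc) hξ₁κ
      have hbs'' : g s ≤ hb ζ' s := hgle ζ' ⟨hζ'pos, hζ'1⟩ s hsIcc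
      have hκ'pos : 0 < min δ₁ ((η/4) * (t - s)) := lt_min hδ₁ (by positivity)
      obtain ⟨yh, ⟨h, hfe, rfl⟩, hylt⟩ := exists_lt_of_lt_csSup (hSne ζ' hζ'pos.le s)
        (by linarith : hb ζ' s - min δ₁ ((η/4) * (t - s)) < hb ζ' s)
      have hκ'1 : min δ₁ ((η/4) * (t - s)) ≤ δ₁ := min_le_left _ _
      have hκ'2 : min δ₁ ((η/4) * (t - s)) ≤ (η/4) * (t - s) := min_le_right _ _
      have hyF : (s, hb ζ' s) ∈ F :=
        ⟨hsIcc, (hbmem ζ' hζ'pos.le s hsIcc).1, (hbmem ζ' hζ'pos.le s hsIcc).2⟩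
      have hhs : h s ≤ hb ζ' s := hble ζ' h hfe s hsIcc
      have hclaim := HL ζ' ⟨hζ'pos.le, hζ'1⟩ h hfe s hs (hb ζ' s) hyF
        (by linarith) hhs t (Set.mem_Ioc.2 ⟨htIoo.1, htIoo.2.le⟩)
      have hfmcomp : fm s (g s) - η/4 ≤ fm s (hb ζ' s) := by
        have hq : (s, g s) ∈ F := ⟨hsIcc, (hgmem s hsIcc).1, (hgmem s hsIcc).2⟩
        have hd2 : |hb ζ' s - g s| ≤ δ₂ := by
          rw [abs_of_nonneg (by linarith : 0 ≤ hb ζ' s - g s)]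
          linarith
        have := (Hmod₂ (s, hb ζ' s) hyF (s, g s) hq (by simp [hδ₂.le]) hd2).1
        linarith [(abs_le.1 this).1]
      have hcoef : (fm s (g s) - 3 * (η/4)) * (t - s) ≤ (fm s (hb ζ' s) - ζ' - η/4) * (t - s) := by
        apply mul_le_mul_of_nonneg_right _ hts.le
        linarith
      have hht : h t ≤ hb ζ' t := hble ζ' h hfe t htIcc
      have : g s + (fm s (g s) - η) * (t - s) ≤ h t := by
        have e1 : (fm s (g s) - η) * (t - s)
            = (fm s (g s) - 3 * (η/4)) * (t - s) - (η/4) * (t - s) := by ring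
        rw [e1]
        have hhs' : hb ζ' s - min δ₁ ((η/4) * (t - s)) ≤ h s := hylt.le
        linarith [hclaim]
      linarith
    rw [le_div_iff₀ hts]
    linarith
  have hgfeas : A 0 g := by
    refine ⟨continuousOn_of_lip hKpos.le hgLip, fun s hs => hgmem s hs, fun s hs => ?_⟩
    exact ⟨hgL s hs, hgU s hs⟩
  -- hence g = hb 0 on [a,b]
  have hgeq : ∀ s ∈ Set.Icc a b, g s = hb 0 s :=
    fun s hs => le_antisymm (hble 0 g hgfeas s hs) (hg0 s hs)
  -- final covering argument
  intro ε hε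
  have hρpos : (0:ℝ) < ε / (4 * (K + 1)) := by positivity
  obtain ⟨T, hT⟩ := isCompact_Icc.elim_finite_subcover
    (fun c : (Set.Icc a b) => Metric.ball (c : ℝ) (ε / (4 * (K + 1))))
    (fun c => Metric.isOpen_ball)
    (fun s hs => Set.mem_iUnion.2 ⟨⟨s, hs⟩, Metric.mem_ball_self hρpos⟩)
  have hchoice : ∀ c : (Set.Icc a b), ∃ ξ' : ℝ, 0 < ξ' ∧ ξ' ≤ 1 ∧ hb ξ' c ≤ g c + ε/2 := by
    intro c
    obtain ⟨ξ', h1, h2, _, h4⟩ := hept c c.2 (ε/2) (by linarith) 1 one_pos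
    exact ⟨ξ', h1, h2, h4⟩
  choose ξc hξcpos hξc1 hξcb using hchoice
  have hTne : T.Nonempty := by
    have ha' : a ∈ Set.Icc a b := Set.mem_Icc.2 ⟨le_rfl, hab.le⟩
    obtain ⟨c, hcT, _⟩ := Set.mem_iUnion₂.1 (hT ha')
    exact ⟨c, hcT⟩
  refine ⟨min 1 (T.inf' hTne ξc), lt_min one_pos ((Finset.lt_inf'_iff _).2 fun c _ => hξcpos c), ?_⟩
  intro ξ hξpos hξle s hs
  obtain ⟨c, hcT, hcball⟩ := Set.mem_iUnion₂.1 (hT hs)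
  have hdsc : |s - (c:ℝ)| < ε / (4 * (K + 1)) := by
    rw [← Real.dist_eq]; exact hcball
  have hξ1 : ξ ≤ 1 := le_trans hξle (min_le_left _ _)
  have hξc' : ξ ≤ ξc c := le_trans hξle (le_trans (min_le_right _ _) (Finset.inf'_le _ hcT))
  have h0s : hb 0 s ≤ hb ξ s := hbmono 0 ξ le_rfl hξpos.le s hs
  have e1 : hb ξ c ≤ g c + ε/2 := le_trans (hbmono ξ (ξc c) hξpos.le hξc' c c.2) (hξcb c)
  have e2 : |hb ξ s - hb ξ (c:ℝ)| ≤ K * |s - (c:ℝ)| := hbLip ξ ⟨hξpos.le, hξ1⟩ (c:ℝ) c.2 s hs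
  have e3 : |g (c:ℝ) - g s| ≤ K * |(c:ℝ) - s| := hgLip s hs (c:ℝ) c.2
  rw [abs_sub_comm (c:ℝ) s] at e3
  have hρval : (K+1) * (ε/(4*(K+1))) = ε/4 := by field_simp
  have hKρ : K * |s - (c:ℝ)| ≤ ε/4 := by
    have h1 : K * |s - (c:ℝ)| ≤ K * (ε / (4*(K+1))) :=
      mul_le_mul_of_nonneg_left hdsc.le hKpos.le
    nlinarith [hρpos]
  have hgs : g s = hb 0 s := hgeq s hs
  show |hb ξ s - hb 0 s| ≤ ε
  rw [abs_of_nonneg (by linarith : (0:ℝ) ≤ hb ξ s - hb 0 s), ← hgs]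
  have a1 := (abs_le.1 e2).2
  have a2 := (abs_le.1 e3).2

  linarith [(abs_le.1 e2).2, (abs_le.1 e3).2, e1, hKρ]
end

section
/- Discrete Grönwall-type bound: let e(s) = δ e^{−λ_h B(b−a)}(e^{λ_h B(s−a)} − 1/2) on [a,b]. If a sequence of errors ε_k ≥ 0 at points a = s₀ < ... < s_n = b satisfies ε₀ ≤ e(s₀) and ε_{k+1} ≤ ½(λ_s + Bλ_h)(s_{k+1}−s_k)² + (1 + Bλ_h(s_{k+1}−s_k)) ε_k, with every step s_{k+1}−s_k ≤ η₁ where η₁ = δ e^{−λ_h B(b−a)} min(1/(2B), Bλ_h/(λ_s + Bλ_h)), then ε_k ≤ e(s_k) for all 0 ≤ k ≤ n. -/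
open Filter Set

theorem stmt_16 (a b δ B lam_s lam_h : ℝ) (hab : a < b)
    (hδ : 0 < δ) (hB : 0 < B) (hls : 0 < lam_s) (hlh : 0 < lam_h)
    (n : ℕ) (hn : 0 < n) (s : ℕ → ℝ) (ε : ℕ → ℝ)
    (hsa : s 0 = a) (hsb : s n = b)
    (hmono : ∀ k < n, s k < s (k + 1))
    (hstep : ∀ k < n, s (k + 1) - s k ≤
      δ * Real.exp (-lam_h * B * (b - a)) * min (1 / (2 * B)) (B * lam_h / (lam_s + B * lam_h)))
    (hε : ∀ k ≤ n, 0 ≤ ε k)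
    (hε0 : ε 0 ≤ δ * Real.exp (-lam_h * B * (b - a)) * (Real.exp (lam_h * B * (s 0 - a)) - 1 / 2))
    (hrec : ∀ k < n, ε (k + 1) ≤
      (1 / 2) * (lam_s + B * lam_h) * (s (k + 1) - s k) ^ 2 +
        (1 + B * lam_h * (s (k + 1) - s k)) * ε k) :
    ∀ k ≤ n, ε k ≤ δ * Real.exp (-lam_h * B * (b - a)) * (Real.exp (lam_h * B * (s k - a)) - 1 / 2) := by
  intro k hk
  induction k with
  | zero => exact hε0
  | succ m ih =>
    have hmn : m < n := hk
    have ihm := ih (le_of_lt hmn)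
    set C := δ * Real.exp (-lam_h * B * (b - a)) with hC
    have hCpos : 0 < C := by rw [hC]; positivity
    clear_value C
    set h := s (m + 1) - s m with hh
    clear_value h
    have hhpos : 0 < h := hh ▸ sub_pos.2 (hmono m hmn)
    have hsum : 0 < lam_s + B * lam_h := by positivity
    have hhle : h ≤ C * (B * lam_h / (lam_s + B * lam_h)) := by
      calc h ≤ C * min (1 / (2 * B)) (B * lam_h / (lam_s + B * lam_h)) := hh ▸ hstep m hmn
        _ ≤ C * (B * lam_h / (lam_s + B * lam_h)) :=
          mul_le_mul_of_nonneg_left (min_le_right _ _) hCpos.le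
    have key : (1 / 2) * (lam_s + B * lam_h) * h ^ 2 ≤ C * (B * lam_h) * h / 2 := by
      have h2 : h * (lam_s + B * lam_h) ≤ C * (B * lam_h) := by
        have := mul_le_mul_of_nonneg_right hhle hsum.le
        calc h * (lam_s + B * lam_h) ≤ C * (B * lam_h / (lam_s + B * lam_h)) * (lam_s + B * lam_h) := this
          _ = C * (B * lam_h) := by field_simp
      nlinarith [mul_le_mul_of_nonneg_right h2 hhpos.le]
    have hexp : Real.exp (lam_h * B * (s (m + 1) - a)) =
        Real.exp (lam_h * B * (s m - a)) * Real.exp (lam_h * B * h) := by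
      rw [hh, ← Real.exp_add]; ring_nf
    have hge : 1 + lam_h * B * h ≤ Real.exp (lam_h * B * h) := by linarith [Real.add_one_le_exp (lam_h * B * h)]
    have hepos : 0 < Real.exp (lam_h * B * (s m - a)) := Real.exp_pos _
    have hrecm := hrec m hmn
    rw [← hh] at hrecm
    have h1 : ε (m + 1) ≤ (1 / 2) * (lam_s + B * lam_h) * h ^ 2 +
        (1 + B * lam_h * h) * (C * (Real.exp (lam_h * B * (s m - a)) - 1 / 2)) := by
      refine le_trans hrecm ?_
      have hmul : (1 + B * lam_h * h) * ε m ≤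
          (1 + B * lam_h * h) * (C * (Real.exp (lam_h * B * (s m - a)) - 1 / 2)) := by
        apply mul_le_mul_of_nonneg_left ihm
        nlinarith
      linarith
    calc ε (m + 1) ≤ _ := h1
      _ ≤ C * (Real.exp (lam_h * B * (s (m + 1) - a)) - 1 / 2) := by
        rw [hexp]
        nlinarith [mul_le_mul_of_nonneg_left hge (mul_pos hCpos hepos).le]
end

section
/- Piecewise-linear interpolation Dini bound: let a = s₀ < ... < s_n = b and (ĥ_i) be reals, and define h̃ on [a,b] by linear interpolation of the values ĥ_i − δ₁ at the points s_i. If for each i, (ĥ_{i+1} − ĥ_i)/(s_{i+1} − s_i) ≤ f⁺(s_i, ĥ_i), each step satisfies s_{i+1} − s_i ≤ δ₁/(1+B), |f⁺| ≤ B, and f⁺ is uniformly continuous so that |s₁−s₂| + |h₁−h₂| ≤ δ₁ implies |f⁺(s₁,h₁) − f⁺(s₂,h₂)| ≤ ξ/2 on its domain, then D⁺h̃(s) ≤ f⁺(s, h̃(s)) + ξ for all s ∈ [a,b). -/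
open Filter Set

theorem stmt_19 (B ξ δ₁ : ℝ) (hB : 0 < B) (hξ : 0 < ξ) (hδ₁ : 0 < δ₁)
    (n : ℕ) (hn : 0 < n) (s : ℕ → ℝ) (hhat : ℕ → ℝ)
    (hmono : ∀ i < n, s i < s (i + 1))
    (fp : ℝ → ℝ → ℝ)
    (hbd : ∀ x y : ℝ, |fp x y| ≤ B)
    (hunif : ∀ x₁ x₂ y₁ y₂ : ℝ, |x₁ - x₂| + |y₁ - y₂| ≤ δ₁ →
      |fp x₁ y₁ - fp x₂ y₂| ≤ ξ / 2)
    (hslope : ∀ i < n, (hhat (i + 1) - hhat i) / (s (i + 1) - s i) ≤ fp (s i) (hhat i))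
    (hstep : ∀ i < n, s (i + 1) - s i ≤ δ₁ / (1 + B))
    (ht : ℝ → ℝ)
    (hinterp : ∀ i < n, ∀ x ∈ Set.Icc (s i) (s (i + 1)),
      ht x = ((x - s i) / (s (i + 1) - s i)) * (hhat (i + 1) - δ₁) +
        ((s (i + 1) - x) / (s (i + 1) - s i)) * (hhat i - δ₁)) :
    ∀ x ∈ Set.Ico (s 0) (s n), DiniUpper ht x ≤ ((fp x (ht x) + ξ : ℝ) : EReal) := by
  classical
  intro x hx
  obtain ⟨hx0, hxn⟩ := hx
  have hP : ∃ k, x < s k := ⟨n, hxn⟩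
  set k := Nat.find hP with hkdef
  have hks : x < s k := Nat.find_spec hP
  have hkmin : ∀ j < k, ¬ x < s j := fun j hj => Nat.find_min hP hj

  have hk0 : k ≠ 0 := by
    intro h
    rw [h] at hks
    exact absurd hx0 (not_le.2 hks)
  have hkn : k ≤ n := Nat.find_le hxn
  clear_value k
  obtain ⟨i, rfl⟩ : ∃ i, k = i + 1 := ⟨k - 1, (Nat.succ_pred_eq_of_pos (Nat.pos_of_ne_zero hk0)).symm⟩
  have hin : i < n := Nat.lt_of_succ_le hkn
  have hsi : s i ≤ x := not_lt.1 (hkmin i (Nat.lt_succ_self i))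
  have hds : 0 < s (i + 1) - s i := sub_pos.2 (hmono i hin)
  set m : ℝ := (hhat (i + 1) - hhat i) / (s (i + 1) - s i) with hm
  -- affine formula on the interval
  have haff : ∀ y ∈ Set.Icc (s i) (s (i + 1)), ht y = (hhat i - δ₁) + m * (y - s i) := by
    intro y hy
    rw [hinterp i hin y hy, hm]
    field_simp
    ring
  have hxmem : x ∈ Set.Icc (s i) (s (i + 1)) := ⟨hsi, le_of_lt hks⟩
  have hneb : (nhdsWithin x (Set.Ioi x)).NeBot := nhdsGT_neBot x
  -- Dini derivative equals m
  have hDini : DiniUpper ht x = ((m : ℝ) : EReal) := by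
    have hev : ∀ᶠ x' in nhdsWithin x (Set.Ioi x),
        (((ht x' - ht x) / (x' - x) : ℝ) : EReal) = ((m : ℝ) : EReal) := by
      filter_upwards [Ioo_mem_nhdsGT_of_mem (⟨le_refl x, hks⟩ : x ∈ Set.Ico x (s (i+1)))]
        with x' hx'
      have hx'mem : x' ∈ Set.Icc (s i) (s (i + 1)) :=
        ⟨le_trans hsi (le_of_lt hx'.1), le_of_lt hx'.2⟩
      have hne : x' - x ≠ 0 := sub_ne_zero.2 (ne_of_gt hx'.1)
      rw [haff x' hx'mem, haff x hxmem]
      have : (hhat i - δ₁ + m * (x' - s i) - (hhat i - δ₁ + m * (x - s i))) / (x' - x) = m := by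
        field_simp
        ring
      rw [this]
    rw [DiniUpper, Filter.limsup_congr hev, Filter.limsup_const]
  rw [hDini, EReal.coe_le_coe_iff]
  -- now real inequality : m ≤ fp x (ht x) + ξ
  have hfpbd : -B ≤ fp x (ht x) := neg_le_of_abs_le (hbd x (ht x))
  by_cases hmB : m ≤ -B
  · linarith
  push_neg at hmB
  have hmslope : m ≤ fp (s i) (hhat i) := hslope i hin
  have hmle : m ≤ B := le_trans hmslope (le_of_abs_le (hbd _ _))
  have habsm : |m| ≤ B := abs_le.2 ⟨le_of_lt hmB, hmle⟩
  set Δ : ℝ := x - s i with hΔ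
  have hΔ0 : 0 ≤ Δ := sub_nonneg.2 hsi
  have hΔle : Δ ≤ δ₁ / (1 + B) := le_trans (by linarith [hks]) (hstep i hin)
  have h1B : 0 < 1 + B := by linarith
  -- step 1
  have hstep1 : |fp (s i) (hhat i) - fp x (hhat i + m * Δ)| ≤ ξ / 2 := by
    apply hunif
    have h1 : |s i - x| = Δ := by rw [abs_sub_comm, abs_of_nonneg hΔ0]
    have h2 : |hhat i - (hhat i + m * Δ)| = |m| * Δ := by
      rw [show hhat i - (hhat i + m * Δ) = -(m * Δ) by ring,
        abs_neg, abs_mul, abs_of_nonneg hΔ0]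
    rw [h1, h2]
    have : Δ + |m| * Δ ≤ (1 + B) * Δ := by nlinarith
    have h3 : (1 + B) * Δ ≤ δ₁ := by
      rw [← le_div_iff₀' h1B]; exact hΔle
    linarith
  -- step 2
  have hhtx : ht x = hhat i - δ₁ + m * Δ := haff x hxmem
  have hstep2 : |fp x (hhat i + m * Δ) - fp x (ht x)| ≤ ξ / 2 := by
    apply hunif
    rw [hhtx]
    simp [abs_of_pos hδ₁, show hhat i + m * Δ - (hhat i - δ₁ + m * Δ) = δ₁ by ring]
  have := abs_sub_abs_le_abs_sub (fp (s i) (hhat i)) (fp x (ht x))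
  have ha := abs_le.1 hstep1
  have hb := abs_le.1 hstep2
  linarith [ha.1, ha.2, hb.1, hb.2]
end
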